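/- Suppose U : [0,1] → ℝ is continuous with U(0) = U(1) = 0, U is affine on each interval ((k−1)/3, k/3) for k = 1,2,3, and the jump conditions U'_−(j/3) − U'_+(j/3) = 12·U(j/3) hold for j = 1,2. Then U ≡ 0. -/
import Mathlib
open Topology Filter

lemma aux_left {U : ℝ → ℝ} {A B a b : ℝ} (hab : a < b)
    (hc : ContinuousWithinAt U (Set.Ioo a b) a)
    (h : ∀ x ∈ Set.Ioo a b, U x = A + B * x) : U a = A + B * a := by
  have hne : (𝓝[Set.Ioo a b] a).NeBot := by
    rw [nhdsWithin_Ioo_eq_nhdsGT hab]; exact nhdsGT_neBot a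
  have h2 : Filter.Tendsto (fun x => A + B * x) (𝓝[Set.Ioo a b] a) (𝓝 (A + B * a)) :=
    ((continuous_const.add (continuous_const.mul continuous_id)).tendsto a).mono_left
      nhdsWithin_le_nhds
  have h3 : Filter.Tendsto U (𝓝[Set.Ioo a b] a) (𝓝 (A + B * a)) :=
    h2.congr' (by filter_upwards [self_mem_nhdsWithin] with x hx using (h x hx).symm)
  exact tendsto_nhds_unique hc h3

lemma aux_right {U : ℝ → ℝ} {A B a b : ℝ} (hab : a < b)
    (hc : ContinuousWithinAt U (Set.Ioo a b) b)
    (h : ∀ x ∈ Set.Ioo a b, U x = A + B * x) : U b = A + B * b := by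
  have hne : (𝓝[Set.Ioo a b] b).NeBot := by
    rw [nhdsWithin_Ioo_eq_nhdsLT hab]; exact nhdsLT_neBot b
  have h2 : Filter.Tendsto (fun x => A + B * x) (𝓝[Set.Ioo a b] b) (𝓝 (A + B * b)) :=
    ((continuous_const.add (continuous_const.mul continuous_id)).tendsto b).mono_left
      nhdsWithin_le_nhds
  have h3 : Filter.Tendsto U (𝓝[Set.Ioo a b] b) (𝓝 (A + B * b)) :=
    h2.congr' (by filter_upwards [self_mem_nhdsWithin] with x hx using (h x hx).symm)
  exact tendsto_nhds_unique hc h3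

/-- If `U` is continuous on `[0,1]` with `U(0) = U(1) = 0`, affine on each interval
`((k−1)/3, k/3)`, `k = 1,2,3`, and the jump conditions
`U'₋(j/3) − U'₊(j/3) = 12U(j/3)` hold for `j = 1,2`, then `U ≡ 0`. -/
theorem stmt10 (U : ℝ → ℝ) (A₁ B₁ A₂ B₂ A₃ B₃ : ℝ)
    (hcont : ContinuousOn U (Set.Icc 0 1))
    (hU0 : U 0 = 0) (hU1 : U 1 = 0)
    (h1 : ∀ x ∈ Set.Ioo (0 : ℝ) (1 / 3), U x = A₁ + B₁ * x)
    (h2 : ∀ x ∈ Set.Ioo (1 / 3 : ℝ) (2 / 3), U x = A₂ + B₂ * x)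
    (h3 : ∀ x ∈ Set.Ioo (2 / 3 : ℝ) 1, U x = A₃ + B₃ * x)
    (hjump1 : B₁ - B₂ = 12 * U (1 / 3))
    (hjump2 : B₂ - B₃ = 12 * U (2 / 3)) :
    ∀ x ∈ Set.Icc (0 : ℝ) 1, U x = 0 := by
  have s1 : Set.Ioo (0:ℝ) (1/3) ⊆ Set.Icc 0 1 := fun x hx => ⟨hx.1.le, by linarith [hx.2]⟩
  have s2 : Set.Ioo (1/3:ℝ) (2/3) ⊆ Set.Icc 0 1 := fun x hx => ⟨by linarith [hx.1], by linarith [hx.2]⟩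
  have s3 : Set.Ioo (2/3:ℝ) 1 ⊆ Set.Icc 0 1 := fun x hx => ⟨by linarith [hx.1], hx.2.le⟩
  have cw : ∀ y ∈ Set.Icc (0:ℝ) 1, ∀ s ⊆ Set.Icc (0:ℝ) 1, ContinuousWithinAt U s y :=
    fun y hy s hs => (hcont y hy).mono hs
  have e0 : U 0 = A₁ + B₁ * 0 :=
    aux_left (by norm_num) (cw 0 (by norm_num) _ s1) h1
  have e1l : U (1/3) = A₁ + B₁ * (1/3) :=
    aux_right (by norm_num) (cw (1/3) (by norm_num) _ s1) h1
  have e1r : U (1/3) = A₂ + B₂ * (1/3) :=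
    aux_left (by norm_num) (cw (1/3) (by norm_num) _ s2) h2
  have e2l : U (2/3) = A₂ + B₂ * (2/3) :=
    aux_right (by norm_num) (cw (2/3) (by norm_num) _ s2) h2
  have e2r : U (2/3) = A₃ + B₃ * (2/3) :=
    aux_left (by norm_num) (cw (2/3) (by norm_num) _ s3) h3
  have e3 : U 1 = A₃ + B₃ * 1 :=
    aux_right (by norm_num) (cw 1 (by norm_num) _ s3) h3
  rw [hU0] at e0
  rw [hU1] at e3
  rw [e1l] at hjump1
  rw [e2l] at hjump2
  have hB1 : B₁ = 0 := by linarith [e1l, e1r, e2l, e2r]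
  have hA1 : A₁ = 0 := by linarith
  have hB2 : B₂ = 0 := by linarith
  have hA2 : A₂ = 0 := by linarith
  have hB3 : B₃ = 0 := by linarith
  have hA3 : A₃ = 0 := by linarith
  intro x hx
  rcases eq_or_lt_of_le hx.1 with h | hx0
  · rw [← h, hU0]
  rcases eq_or_lt_of_le hx.2 with h | hx1
  · rw [h, hU1]
  rcases lt_trichotomy x (1/3) with hlt | heq | hgt
  · rw [h1 x ⟨hx0, hlt⟩, hA1, hB1]; ring
  · rw [heq, e1l, hA1, hB1]; ring
  rcases lt_trichotomy x (2/3) with hlt | heq | hgt2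
  · rw [h2 x ⟨hgt, hlt⟩, hA2, hB2]; ring
  · rw [heq, e2l, hA2, hB2]; ring
  · rw [h3 x ⟨hgt2, hx1⟩, hA3, hB3]; ring
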